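/- Let A be an associative algebra, let σ₁,...,σ_N ∈ A, and let u ∈ A be an element commuting with each σ_i. Then for 1 ≤ m ≤ N, E_m(σ₁+u, σ₂+u, ..., σ_N+u) = Σ_{j=0}^{m} binom(N-j, m-j) · E_j(σ₁,...,σ_N) · u^{m-j}, where E_j denotes the j-th noncommutative elementary symmetric polynomial. -/

import Mathlib

/-!
Expanding the decreasing product of the `σ i + u` over a set `s` and moving every `u` to the
right (allowed since `u` commutes with the `σ i`) gives `∑_{r ⊆ s} σ_r u^{|s| - |r|}`, where `σ_r`
is the decreasing product over `r`. Summing over the `m`-subsets `s` of `{1, …, N}`, a `j`-subset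
`r` lies in exactly `C(N - j, m - j)` of them, which is the coefficient of `E_j u^{m-j}`.
-/

open Finset in
/-- The m-th noncommutative elementary symmetric polynomial. -/
noncomputable def esymmNC {A : Type*} [Ring A] {N : ℕ} (ω : Fin N → A) (m : ℕ) : A :=
  ∑ s ∈ Finset.powersetCard m (Finset.univ : Finset (Fin N)),
    (((s.sort (· ≤ ·)).reverse).map ω).prod

open Finset

namespace Finset

variable {ι : Type*}

theorem sort_insert_of_forall_lt [LinearOrder ι] {s : Finset ι} {a : ι} (ha : ∀ x ∈ s, x < a) :
    (insert a s).sort (· ≤ ·) = s.sort (· ≤ ·) ++ [a] := by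
  have has : a ∉ s := fun h => (ha a h).false
  refine List.Perm.eq_of_pairwise' (pairwise_sort _ _) ?_ ?_
  · exact List.pairwise_append.2 ⟨pairwise_sort _ _, List.pairwise_singleton _ _,
      fun x hx y hy => (List.mem_singleton.1 hy) ▸ (ha x ((mem_sort _).1 hx)).le⟩
  · rw [List.perm_ext_iff_of_nodup (sort_nodup _ _)
      (List.nodup_append.2 ⟨sort_nodup _ _, List.nodup_singleton a, by simpa using has⟩)]
    intro x
    simp [or_comm]

theorem sum_powersetCard_sum_powerset {M : Type*} [DecidableEq ι] [AddCommMonoid M]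
    (t : Finset ι) (m : ℕ) (f : Finset ι → M) :
    ∑ s ∈ t.powersetCard m, ∑ r ∈ s.powerset, f r =
      ∑ j ∈ range (m + 1), (#t - j).choose (m - j) • ∑ r ∈ t.powersetCard j, f r := by
  calc ∑ s ∈ t.powersetCard m, ∑ r ∈ s.powerset, f r
      = ∑ s ∈ t.powersetCard m, ∑ j ∈ range (m + 1), ∑ r ∈ s.powersetCard j, f r :=
        sum_congr rfl fun s hs => by rw [sum_powerset, (mem_powersetCard.1 hs).2]
    _ = ∑ j ∈ range (m + 1), ∑ r ∈ t.powersetCard j,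
          ∑ _s ∈ (t.powersetCard m).filter (r ⊆ ·), f r := by
        rw [sum_comm]
        refine sum_congr rfl fun j _ => sum_comm' fun s r => ?_
        simp only [mem_powersetCard, mem_filter]
        constructor
        · rintro ⟨hs, hrs, hj⟩; exact ⟨⟨hs, hrs⟩, hrs.trans hs.1, hj⟩
        · rintro ⟨⟨hs, hrs⟩, -, hj⟩; exact ⟨hs, hrs, hj⟩
    _ = _ := by
        refine sum_congr rfl fun j hj => ?_
        rw [smul_sum]
        refine sum_congr rfl fun r hr => ?_
        obtain ⟨hrt, rfl⟩ := mem_powersetCard.1 hr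
        rw [sum_const,
          card_filter_powersetCard_subset r t m hrt (Nat.lt_succ_iff.1 (mem_range.1 hj))]

end Finset

section DescProd

variable {ι A : Type*} [LinearOrder ι]

def descProd [Monoid A] (ω : ι → A) (s : Finset ι) : A :=
  ((s.sort (· ≤ ·)).reverse.map ω).prod

@[simp]
theorem descProd_empty [Monoid A] (ω : ι → A) : descProd ω ∅ = 1 := by
  simp [descProd]

theorem descProd_insert_of_forall_lt [Monoid A] (ω : ι → A) {s : Finset ι} {a : ι}
    (ha : ∀ x ∈ s, x < a) : descProd ω (insert a s) = ω a * descProd ω s := by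
  simp [descProd, sort_insert_of_forall_lt ha]

theorem Commute.descProd_right [Monoid A] {ω : ι → A} {u : A} (hu : ∀ i, Commute u (ω i))
    (s : Finset ι) : Commute u (descProd ω s) :=
  Commute.list_prod_right _ _ fun _ hx => by
    obtain ⟨i, -, rfl⟩ := List.mem_map.1 hx
    exact hu i

theorem descProd_add_of_commute [Semiring A] {σ : ι → A} {u : A} (hu : ∀ i, Commute u (σ i))
    (s : Finset ι) :
    descProd (fun i => σ i + u) s = ∑ r ∈ s.powerset, descProd σ r * u ^ (#s - #r) := by
  classical
  induction s using Finset.induction_on_max with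
  | empty => simp
  | insert a s ha ih =>
    have has : a ∉ s := fun h => (ha a h).false
    rw [descProd_insert_of_forall_lt _ ha, ih, sum_powerset_insert has, card_insert_of_notMem has,
      add_mul, mul_sum, mul_sum, add_comm]
    congr 1
    · refine sum_congr rfl fun r hr => ?_
      have hrs : #r ≤ #s := card_le_card (mem_powerset.1 hr)
      rw [Nat.succ_sub hrs, pow_succ', ← mul_assoc, (Commute.descProd_right hu r).eq, mul_assoc]
    · refine sum_congr rfl fun r hr => ?_
      have hrs : #r ≤ #s := card_le_card (mem_powerset.1 hr)
      rw [descProd_insert_of_forall_lt _ fun x hx => ha x (mem_powerset.1 hr hx),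
        card_insert_of_notMem fun h => has (mem_powerset.1 hr h), mul_assoc]
      congr 3
      omega

end DescProd

theorem esymmNC_eq_sum_descProd {A : Type*} [Ring A] {N : ℕ} (ω : Fin N → A) (m : ℕ) :
    esymmNC ω m = ∑ s ∈ powersetCard m univ, descProd ω s :=
  rfl

theorem esymmNC_shift_general {A : Type*} [Ring A] {N : ℕ} (σ : Fin N → A) (u : A)
    (hu : ∀ i, u * σ i = σ i * u) (m : ℕ) :
    esymmNC (fun i => σ i + u) m =
      ∑ j ∈ Finset.range (m + 1),
        ((N - j).choose (m - j) : A) * (esymmNC σ j * u ^ (m - j)) := by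
  calc esymmNC (fun i => σ i + u) m
      = ∑ s ∈ powersetCard m univ, ∑ r ∈ s.powerset, descProd σ r * u ^ (m - #r) :=
        sum_congr rfl fun s hs => by
          rw [← (mem_powersetCard.1 hs).2]
          exact descProd_add_of_commute hu s
    _ = ∑ j ∈ range (m + 1), (N - j).choose (m - j) •
          ∑ r ∈ powersetCard j univ, descProd σ r * u ^ (m - #r) := by
        rw [sum_powersetCard_sum_powerset, card_univ, Fintype.card_fin]
    _ = _ := sum_congr rfl fun j _ => by
        rw [nsmul_eq_mul, esymmNC_eq_sum_descProd, sum_mul]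
        congr 1
        exact sum_congr rfl fun r hr => by rw [(mem_powersetCard.1 hr).2]

/-- Shifted expansion: for u commuting with each σ_i,
E_m(σ₁+u,...,σ_N+u) = Σ_{j=0}^{m} C(N-j, m-j) E_j(σ₁,...,σ_N) u^{m-j}. -/
theorem esymmNC_shift {A : Type*} [Ring A] {N : ℕ} (σ : Fin N → A) (u : A)
    (hu : ∀ i, u * σ i = σ i * u) (m : ℕ) (hm1 : 1 ≤ m) (hm2 : m ≤ N) :
    esymmNC (fun i => σ i + u) m =
      ∑ j ∈ Finset.range (m + 1),
        ((N - j).choose (m - j) : A) * (esymmNC σ j * u ^ (m - j)) :=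
  esymmNC_shift_general σ u hu m
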